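/- Inverses of effect-domination-preserving diffeomorphisms (Lemma D.5 / dom-preserving-map-inverse). Let G be a DAG on [d] and let ψ : ℝ^d → ℝ^d be a C¹-diffeomorphism such that for every i ∈ [d], the component ψ_i(z) depends only on the coordinates z_j with j ∈ \bar{dom}_G(i) (i.e. ψ_i(z) = ψ_i(z′) whenever z_j = z′_j for all j ∈ \bar{dom}_G(i)). Then for every j ∈ [d], the component (ψ^{−1})_j(v) of the inverse map depends only on the coordinates v_ℓ with ℓ ∈ \bar{dom}_G(j). -/

import Mathlib

open Matrix MeasureTheory

/-- `E i j` means there is a directed edge `i → j`. A DAG has no directed cycles. -/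
def IsDAG {d : ℕ} (E : Fin d → Fin d → Prop) : Prop :=
  ∀ i, ¬ Relation.TransGen E i i

/-- The set of parents of `i`. -/
def pa {d : ℕ} (E : Fin d → Fin d → Prop) (i : Fin d) : Set (Fin d) := {j | E j i}

/-- The set of children of `i`. -/
def ch {d : ℕ} (E : Fin d → Fin d → Prop) (i : Fin d) : Set (Fin d) := {j | E i j}

/-- `pa_G(i) ∪ {i}`. -/
def barPa {d : ℕ} (E : Fin d → Fin d → Prop) (i : Fin d) : Set (Fin d) := insert i (pa E i)

/-- `ch_G(i) ∪ {i}`. -/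
def barCh {d : ℕ} (E : Fin d → Fin d → Prop) (i : Fin d) : Set (Fin d) := insert i (ch E i)

/-- The effect-domination set `dom_G(i) = {j ∈ pa_G(i) : ch_G(i) ⊆ ch_G(j)}`. -/
def domSet {d : ℕ} (E : Fin d → Fin d → Prop) (i : Fin d) : Set (Fin d) :=
  {j | j ∈ pa E i ∧ ch E i ⊆ ch E j}

/-- `dom_G(i) ∪ {i}`. -/
def barDom {d : ℕ} (E : Fin d → Fin d → Prop) (i : Fin d) : Set (Fin d) :=
  insert i (domSet E i)

/-- Ancestors of `i`: nodes with a directed path to `i`. -/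
def ans {d : ℕ} (E : Fin d → Fin d → Prop) (i : Fin d) : Set (Fin d) :=
  {j | Relation.TransGen E j i}

/-- A set is ancestral if it is closed under taking ancestors. -/
def Ancestral {d : ℕ} (E : Fin d → Fin d → Prop) (S : Set (Fin d)) : Prop :=
  ∀ j ∈ S, ans E j ⊆ S

/-- The support of `B` matches the graph: `B i j ≠ 0 ↔ j ∈ \bar{pa}_G(i)`. -/
def SupportMatches {d : ℕ} (E : Fin d → Fin d → Prop) (B : Matrix (Fin d) (Fin d) ℝ) : Prop :=
  ∀ i j, B i j ≠ 0 ↔ j ∈ barPa E i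

/-- Node-level non-degeneracy: for every node `i`, the span of the `i`-th rows
`(B_k)_i` has dimension `|pa_G(i)| + 1`. -/
def NodeNonDegenerate {d K : ℕ} (E : Fin d → Fin d → Prop)
    (B : Fin K → Matrix (Fin d) (Fin d) ℝ) : Prop :=
  ∀ i, Module.finrank ℝ (Submodule.span ℝ (Set.range fun k => B k i)) = (pa E i).ncard + 1

/-- A function `f : ℝ^d → ℝ` depends only on the coordinates in `S`. -/
def DependsOnlyOn {d : ℕ} (S : Set (Fin d)) (f : (Fin d → ℝ) → ℝ) : Prop :=
  ∀ z z' : Fin d → ℝ, (∀ j ∈ S, z j = z' j) → f z = f z'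

/-!
Call a map triangular when its `i`-th component reads only the coordinates in `\bar{dom}(i)`.
Since `ℓ ∈ \bar{dom}(i)` is a reflexive and transitive relation, triangular linear maps form a
subalgebra of the finite-dimensional algebra of endomorphisms of `ℝ^d`, and a finite-dimensional
subalgebra contains the inverse of each of its elements that is invertible in the ambient algebra.
The Jacobian of `ψ` is triangular, hence so is its inverse, the Jacobian of `ψ⁻¹`; and a map whose
Jacobian is triangular everywhere is triangular, by the mean value theorem along segments.
-/

theorem Subalgebra.mem_of_mul_eq_one {K A : Type*} [Field K] [Ring A] [Algebra K A]
    [FiniteDimensional K A] (S : Subalgebra K A) {a b : A} (ha : a ∈ S)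
    (hab : a * b = 1) (hba : b * a = 1) : b ∈ S := by
  set a' : S := ⟨a, ha⟩
  have ha' : a' ∈ nonZeroDivisors S := by
    refine ⟨fun x hx => Subtype.ext ?_, fun x hx => Subtype.ext ?_⟩
    · have hx' : a * x = 0 := congrArg Subtype.val hx
      calc (x : A) = b * a * x := by rw [hba, one_mul]
        _ = 0 := by rw [mul_assoc, hx', mul_zero]
    · have hx' : x * a = 0 := congrArg Subtype.val hx
      calc (x : A) = x * a * b := by rw [mul_assoc, hab, mul_one]
        _ = 0 := by rw [hx', zero_mul]
  obtain ⟨u, hu⟩ :=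
    IsArtinianRing.isUnit_of_isIntegral_of_nonZeroDivisor (IsIntegral.of_finite K a') ha'
  set c : S := ↑u⁻¹
  have hac : a * c = 1 := by
    change ((a' * c : S) : A) = 1
    rw [← hu, Units.mul_inv, Subalgebra.coe_one]
  have hbc : b = c := by
    calc b = b * (a * c) := by rw [hac, mul_one]
      _ = c := by rw [← mul_assoc, hba, one_mul]
  exact hbc ▸ c.2

theorem fderiv_comp_fderiv_of_leftInverse {𝕜 E F : Type*} [NontriviallyNormedField 𝕜]
    [NormedAddCommGroup E] [NormedSpace 𝕜 E] [NormedAddCommGroup F] [NormedSpace 𝕜 F]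
    {f : E → F} {g : F → E} (hgf : Function.LeftInverse g f) {x : E}
    (hf : DifferentiableAt 𝕜 f x) (hg : DifferentiableAt 𝕜 g (f x)) :
    (fderiv 𝕜 g (f x)).comp (fderiv 𝕜 f x) = ContinuousLinearMap.id 𝕜 E := by
  rw [← fderiv_comp x hg hf, hgf.comp_eq_id, fderiv_id]

section DependsOnlyOn

variable {d : ℕ} {S : Set (Fin d)} {f : (Fin d → ℝ) → ℝ}

theorem DependsOnlyOn.fderiv (hf : DependsOnlyOn S f) (z : Fin d → ℝ) :
    DependsOnlyOn S (_root_.fderiv ℝ f z) := by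
  by_cases hfz : DifferentiableAt ℝ f z
  · intro u u' huu'
    suffices _root_.fderiv ℝ f z (u - u') = 0 by rwa [map_sub, sub_eq_zero] at this
    have hline : (fun t : ℝ => f (z + t • (u - u'))) = fun _ => f z :=
      funext fun t => hf _ _ fun j hj => by simp [huu' j hj]
    rw [← hfz.lineDeriv_eq_fderiv, lineDeriv, hline, deriv_const]
  · rw [fderiv_zero_of_not_differentiableAt hfz]
    exact fun _ _ _ => rfl

theorem dependsOnlyOn_of_fderiv (hf : Differentiable ℝ f)
    (hf' : ∀ z, DependsOnlyOn S (fderiv ℝ f z)) : DependsOnlyOn S f := by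
  intro z z' hzz'
  have hderiv : ∀ t : ℝ, HasDerivAt (fun t : ℝ => f (z + t • (z' - z))) 0 t := by
    intro t
    have hline : HasDerivAt (fun t : ℝ => z + t • (z' - z)) (z' - z) t := by
      simpa using ((hasDerivAt_id t).smul_const (z' - z)).const_add z
    have hzero : fderiv ℝ f (z + t • (z' - z)) (z' - z) = 0 := by
      rw [hf' _ (z' - z) 0 fun j hj => by simp [hzz' j hj], map_zero]
    exact hzero ▸ (hf _).hasFDerivAt.comp_hasDerivAt t hline
  simpa using is_const_of_deriv_eq_zero (fun t => (hderiv t).differentiableAt)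
    (fun t => (hderiv t).deriv) 0 1

end DependsOnlyOn

def IsTriangular {d : ℕ} (S : Fin d → Set (Fin d)) (f : (Fin d → ℝ) → Fin d → ℝ) : Prop :=
  ∀ i, DependsOnlyOn (S i) (fun z => f z i)

namespace IsTriangular

variable {d : ℕ} {S : Fin d → Set (Fin d)} {f g : (Fin d → ℝ) → Fin d → ℝ}

theorem id (hrefl : ∀ i, i ∈ S i) : IsTriangular S id :=
  fun i _ _ hzz' => hzz' i (hrefl i)

theorem comp (htrans : ∀ {i j}, j ∈ S i → S j ⊆ S i) (hf : IsTriangular S f)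
    (hg : IsTriangular S g) : IsTriangular S (f ∘ g) :=
  fun i z z' hzz' => hf i _ _ fun k hk => hg k z z' fun j hj => hzz' j (htrans hk hj)

theorem add (hf : IsTriangular S f) (hg : IsTriangular S g) : IsTriangular S (f + g) :=
  fun i z z' hzz' => congrArg₂ (· + ·) (hf i z z' hzz') (hg i z z' hzz')

theorem const_smul (c : ℝ) (hf : IsTriangular S f) : IsTriangular S (c • f) :=
  fun i z z' hzz' => congrArg (c * ·) (hf i z z' hzz')

theorem fderiv (hf : IsTriangular S f) (z : Fin d → ℝ) :
    IsTriangular S (_root_.fderiv ℝ f z) := by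
  by_cases hfz : DifferentiableAt ℝ f z
  · intro i
    have hi := (hf i).fderiv z
    rw [fderiv_apply hfz i] at hi
    exact hi
  · rw [fderiv_zero_of_not_differentiableAt hfz]
    exact fun _ _ _ _ => rfl

theorem of_fderiv (hf : Differentiable ℝ f)
    (hf' : ∀ z, IsTriangular S (_root_.fderiv ℝ f z)) : IsTriangular S f := by
  intro i
  refine dependsOnlyOn_of_fderiv (differentiable_pi.1 hf i) fun z => ?_
  rw [fderiv_apply (hf z) i]
  exact hf' z i

end IsTriangular

def triangularSubalgebra {d : ℕ} (S : Fin d → Set (Fin d)) (hrefl : ∀ i, i ∈ S i)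
    (htrans : ∀ {i j}, j ∈ S i → S j ⊆ S i) :
    Subalgebra ℝ ((Fin d → ℝ) →L[ℝ] (Fin d → ℝ)) where
  carrier := {L | IsTriangular S L}
  mul_mem' {L M} hL hM := show IsTriangular S (L ∘ M) from hL.comp htrans hM
  add_mem' hL hM := IsTriangular.add hL hM
  algebraMap_mem' c := by
    simpa [Algebra.algebraMap_eq_smul_one] using (IsTriangular.id hrefl).const_smul c

theorem mem_barDom_self {d : ℕ} (E : Fin d → Fin d → Prop) (i : Fin d) : i ∈ barDom E i :=
  Set.mem_insert i _

theorem barDom_subset_of_mem {d : ℕ} (E : Fin d → Fin d → Prop) {i j : Fin d}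
    (hj : j ∈ barDom E i) : barDom E j ⊆ barDom E i := by
  rcases hj with rfl | ⟨hji, hchi⟩
  · exact subset_rfl
  rintro k (rfl | ⟨hkj, hchj⟩)
  · exact Or.inr ⟨hji, hchi⟩
  · exact Or.inr ⟨hchj hji, hchi.trans hchj⟩

theorem dom_preserving_map_inverse_general {d : ℕ} (E : Fin d → Fin d → Prop)
    (ψ ψinv : (Fin d → ℝ) → (Fin d → ℝ))
    (hψ : ContDiff ℝ 1 ψ) (hψinv : ContDiff ℝ 1 ψinv)
    (hleft : Function.LeftInverse ψinv ψ) (hright : Function.RightInverse ψinv ψ)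
    (hdep : ∀ i, DependsOnlyOn (barDom E i) (fun z => ψ z i)) :
    ∀ j, DependsOnlyOn (barDom E j) (fun v => ψinv v j) := by
  have hψd : Differentiable ℝ ψ := hψ.differentiable one_ne_zero
  have hψinvd : Differentiable ℝ ψinv := hψinv.differentiable one_ne_zero
  refine IsTriangular.of_fderiv hψinvd fun v => ?_
  obtain ⟨z, rfl⟩ := hright.surjective v
  have hBA := fderiv_comp_fderiv_of_leftInverse hleft (hψd z) (hψinvd _)
  have hAB := fderiv_comp_fderiv_of_leftInverse hright (hψinvd (ψ z)) (hψd _)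
  rw [hleft z] at hAB
  exact (triangularSubalgebra _ (mem_barDom_self E) (barDom_subset_of_mem E)).mem_of_mul_eq_one
    (IsTriangular.fderiv hdep z) hAB hBA

/-- Inverses of effect-domination-preserving C¹-diffeomorphisms (Lemma D.5). -/
theorem dom_preserving_map_inverse {d : ℕ} (E : Fin d → Fin d → Prop) (hG : IsDAG E)
    (ψ ψinv : (Fin d → ℝ) → (Fin d → ℝ))
    (hψ : ContDiff ℝ 1 ψ) (hψinv : ContDiff ℝ 1 ψinv)
    (hleft : Function.LeftInverse ψinv ψ) (hright : Function.RightInverse ψinv ψ)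
    (hdep : ∀ i, DependsOnlyOn (barDom E i) (fun z => ψ z i)) :
    ∀ j, DependsOnlyOn (barDom E j) (fun v => ψinv v j) :=
  dom_preserving_map_inverse_general E ψ ψinv hψ hψinv hleft hright hdep
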